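/- For k ≥ 1 and integers n_i ≥ 3 for 1 ≤ i ≤ k, the strong product of paths satisfies B(⊠_{i=1}^k P_{n_i}) = 3^k − 1. -/

import Mathlib

open SimpleGraph

/-- A token may stay in place or move along an edge. -/
def stepRel {V : Type*} (G : SimpleGraph V) (x y : V) : Prop := x = y ∨ G.Adj x y

/-- The sequence of positions in the pursuit game: `(gamePlay ...) n` is the pair
(pursuer positions, evader position) after `n` full rounds; at time `0` the pursuers
have been placed (`binit`) and then the evader placed (`pinit binit`). In each round,
the pursuers move first (via `bmove`, seeing the current state), then the evader moves
(via `pmove`, seeing the pursuers' new positions and his own position). -/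
def gamePlay {V : Type*} {k : ℕ} (binit : Fin k → V) (bmove : (Fin k → V) → V → Fin k → V)
    (pinit : (Fin k → V) → V) (pmove : (Fin k → V) → V → V) : ℕ → (Fin k → V) × V
  | 0 => (binit, pinit binit)
  | n + 1 =>
      let s := gamePlay binit bmove pinit pmove n
      (bmove s.1 s.2, pmove (bmove s.1 s.2) s.2)

/-- `k` bodyguards have a winning strategy on `G`: they can place themselves and move so
that, against every president strategy, after finitely many rounds they occupy the whole
open neighbourhood of the president's vertex at the end of every bodyguard turn. -/
def BodyguardsWin {V : Type*} (G : SimpleGraph V) (k : ℕ) : Prop :=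
  ∃ (binit : Fin k → V) (bmove : (Fin k → V) → V → Fin k → V),
    (∀ bs p i, stepRel G (bs i) (bmove bs p i)) ∧
    ∀ (pinit : (Fin k → V) → V) (pmove : (Fin k → V) → V → V),
      (∀ bs p, stepRel G p (pmove bs p)) →
      ∃ N, ∀ n, N ≤ n →
        ∀ v, G.Adj (gamePlay binit bmove pinit pmove n).2 v →
          ∃ i, (gamePlay binit bmove pinit pmove (n + 1)).1 i = v

/-- The bodyguard number of a finite graph. -/
noncomputable def bodyguardNumber {V : Type*} (G : SimpleGraph V) [Fintype V] : ℕ :=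
  sInf {k | BodyguardsWin G k}

/-- `k` cops have a winning strategy in classic Cops and Robber on `G`: at some point a cop
occupies the same vertex as the robber (either right after a cop move, or at the end of a
round). -/
def CopsWin {V : Type*} (G : SimpleGraph V) (k : ℕ) : Prop :=
  ∃ (cinit : Fin k → V) (cmove : (Fin k → V) → V → Fin k → V),
    (∀ cs r i, stepRel G (cs i) (cmove cs r i)) ∧
    ∀ (rinit : (Fin k → V) → V) (rmove : (Fin k → V) → V → V),
      (∀ cs r, stepRel G r (rmove cs r)) →
      ∃ n i, (gamePlay cinit cmove rinit rmove (n + 1)).1 i =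
                (gamePlay cinit cmove rinit rmove n).2 ∨
             (gamePlay cinit cmove rinit rmove n).1 i =
                (gamePlay cinit cmove rinit rmove n).2

/-- The cop number of a finite graph. -/
noncomputable def copNumber {V : Type*} (G : SimpleGraph V) [Fintype V] : ℕ :=
  sInf {k | CopsWin G k}

/-- The `k`-fold strong product of paths `⊠_{i=1}^k P_{n i}`: two distinct tuples are
adjacent iff in every coordinate they are equal or adjacent in the corresponding path. -/
def strongGrid (k : ℕ) (n : Fin k → ℕ) : SimpleGraph ((i : Fin k) → Fin (n i)) where
  Adj x y := x ≠ y ∧ ∀ i, x i = y i ∨ (SimpleGraph.pathGraph (n i)).Adj (x i) (y i)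
  symm := by
    refine ⟨?_⟩
    rintro x y ⟨hne, h⟩
    exact ⟨hne.symm, fun i => (h i).imp Eq.symm SimpleGraph.Adj.symm⟩
  loopless := ⟨fun x h => h.1 rfl⟩

/-!
A president who never leaves an interior vertex, of degree `3 ^ k - 1`, needs that many
bodyguards. Conversely, give each bodyguard its own nonzero offset `d ∈ {-1, 0, 1}ᵏ` and let it
step, coordinate by coordinate, towards the clamped vertex `p + d` of the president `p`. This
shadow moves by at most one in each coordinate per round, and on a finite path a pursuer that
always steps towards such a target eventually lands on it and stays on it from then on. Once all
bodyguards sit on their shadows, the shadows cover the neighbourhood of `p`.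
-/

open Filter

lemma stepRel_refl {V : Type*} (G : SimpleGraph V) (x : V) : stepRel G x x := Or.inl rfl

lemma adj_iff_ne_and_stepRel {V : Type*} {G : SimpleGraph V} {x y : V} :
    G.Adj x y ↔ x ≠ y ∧ stepRel G x y :=
  ⟨fun h => ⟨h.ne, Or.inr h⟩, fun ⟨hne, h⟩ => h.resolve_left hne⟩

section Bodyguards

variable {V : Type*} {G : SimpleGraph V}

lemma gamePlay_snd_of_stationary {m : ℕ} (binit : Fin m → V)
    (bmove : (Fin m → V) → V → Fin m → V) (v : V) (r : ℕ) :
    (gamePlay binit bmove (fun _ => v) (fun _ p => p) r).2 = v := by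
  induction r with
  | zero => rfl
  | succ r ih => exact ih

theorem BodyguardsWin.degree_le {m : ℕ} (h : BodyguardsWin G m) (v : V)
    [Fintype (G.neighborSet v)] : G.degree v ≤ m := by
  obtain ⟨binit, bmove, -, hwin⟩ := h
  obtain ⟨N, hN⟩ := hwin (fun _ => v) (fun _ p => p) (fun _ _ => stepRel_refl G _)
  have hcover : ∀ w : G.neighborSet v,
      ∃ i, (gamePlay binit bmove (fun _ => v) (fun _ p => p) (N + 1)).1 i = w := fun w =>
    hN N le_rfl w (by rw [gamePlay_snd_of_stationary]; exact w.2)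
  choose guard hguard using hcover
  have hinj : Function.Injective guard := fun w w' h =>
    Subtype.ext ((hguard w).symm.trans (h ▸ hguard w'))
  simpa [← card_neighborSet_eq_degree] using Fintype.card_le_of_injective guard hinj

/-- `EventuallyShadows G chase`: a pursuer who, each round, moves from `b m` to
`chase (b m) (t m)` after seeing the target at `t m`, eventually always lands on the target's
current vertex, whatever legal walk `t` the target follows. -/
def EventuallyShadows (G : SimpleGraph V) (chase : V → V → V) : Prop :=
  ∀ b t : ℕ → V, (∀ m, stepRel G (t m) (t (m + 1))) →
    (∀ m, b (m + 1) = chase (b m) (t m)) → ∀ᶠ m in atTop, b (m + 1) = t m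

/-- Bodyguard `j` plays `chase` against the shadow `f j p` of the president `p`. -/
theorem bodyguardsWin_of_shadows [Nonempty V] {m : ℕ} {chase : V → V → V}
    (hlegal : ∀ b t, stepRel G b (chase b t)) (hchase : EventuallyShadows G chase)
    (f : Fin m → V → V) (hf : ∀ j p q, stepRel G p q → stepRel G (f j p) (f j q))
    (hcover : ∀ p v, G.Adj p v → ∃ j, f j p = v) : BodyguardsWin G m := by
  refine ⟨fun _ => Classical.arbitrary V, fun bs p j => chase (bs j) (f j p),
    fun _ _ _ => hlegal _ _, fun pinit pmove hpmove => ?_⟩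
  set play := gamePlay (fun _ => Classical.arbitrary V) (fun bs p j => chase (bs j) (f j p))
    pinit pmove
  have hshadow : ∀ᶠ r in atTop, ∀ j, (play (r + 1)).1 j = f j (play r).2 :=
    eventually_all.2 fun j =>
      hchase (fun r => (play r).1 j) (fun r => f j (play r).2)
        (fun r => hf j _ _ (hpmove _ _)) (fun _ => rfl)
  obtain ⟨N, hN⟩ := eventually_atTop.1 hshadow
  refine ⟨N, fun r hr v hv => ?_⟩
  obtain ⟨j, rfl⟩ := hcover _ v hv
  exact ⟨j, hN r hr j⟩

theorem bodyguardNumber_eq_of_le_degree [Fintype V] {m : ℕ} (h : BodyguardsWin G m) (v : V)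
    [Fintype (G.neighborSet v)] (hv : m ≤ G.degree v) : bodyguardNumber G = m := by
  have hmin : BodyguardsWin G (bodyguardNumber G) :=
    Nat.sInf_mem (s := {k | BodyguardsWin G k}) ⟨m, h⟩
  exact le_antisymm (Nat.sInf_le h) (hv.trans (hmin.degree_le v))

end Bodyguards

section Path

variable {n : ℕ}

def stepToward (x y : Fin n) : Fin n :=
  if h : (x : ℕ) < y then ⟨x + 1, Nat.lt_of_le_of_lt h y.isLt⟩
  else if (y : ℕ) < x then ⟨x - 1, by omega⟩ else x

lemma val_stepToward (x y : Fin n) : (stepToward x y : ℕ) =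
    if (x : ℕ) < y then (x : ℕ) + 1 else if (y : ℕ) < x then (x : ℕ) - 1 else x := by
  unfold stepToward
  split_ifs <;> rfl

lemma stepRel_pathGraph_iff {x y : Fin n} :
    stepRel (pathGraph n) x y ↔ (x : ℕ) ≤ y + 1 ∧ (y : ℕ) ≤ x + 1 := by
  simp only [stepRel, pathGraph_adj, Fin.ext_iff]
  omega

lemma stepRel_stepToward (x y : Fin n) : stepRel (pathGraph n) x (stepToward x y) := by
  rw [stepRel_pathGraph_iff, val_stepToward]
  split_ifs <;> omega

lemma stepToward_eq_of_stepRel {x y : Fin n} (h : stepRel (pathGraph n) x y) :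
    stepToward x y = y := by
  rw [stepRel_pathGraph_iff] at h
  rw [Fin.ext_iff, val_stepToward]
  split_ifs <;> omega

variable {b t : ℕ → Fin n}

/-- Until it catches the target, the pursuer stays strictly on one side of it and hence moves
monotonically, which it cannot do forever on a finite path. -/
theorem exists_stepToward_catch (ht : ∀ m, stepRel (pathGraph n) (t m) (t (m + 1)))
    (hb : ∀ m, b (m + 1) = stepToward (b m) (t m)) : ∃ m, b (m + 1) = t m := by
  by_contra! hne
  replace hne : ∀ m, (b (m + 1) : ℕ) ≠ t m := fun m h => hne m (Fin.ext h)
  have hmove : ∀ m, (b (m + 1 + 1) : ℕ) =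
      if (b (m + 1) : ℕ) < t (m + 1) then (b (m + 1) : ℕ) + 1
      else if (t (m + 1) : ℕ) < b (m + 1) then (b (m + 1) : ℕ) - 1 else b (m + 1) := fun m => by
    rw [hb (m + 1), val_stepToward]
  have hclose := fun m => stepRel_pathGraph_iff.1 (ht m)
  rcases (hne 0).lt_or_gt with h0 | h0
  · have hup : ∀ m, (b (m + 1) : ℕ) < t m ∧ (b (m + 1) : ℕ) = b 1 + m := by
      intro m
      induction m with
      | zero => exact ⟨h0, rfl⟩
      | succ m ih =>
        have hm := hmove m
        have := hclose m
        have := hne (m + 1)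
        split_ifs at hm <;> omega
    have := hup n
    have := (t n).isLt
    omega
  · have hdown : ∀ m, (t m : ℕ) < b (m + 1) ∧ (b (m + 1) : ℕ) + m = b 1 := by
      intro m
      induction m with
      | zero => exact ⟨h0, rfl⟩
      | succ m ih =>
        have hm := hmove m
        have := hclose m
        have := hne (m + 1)
        split_ifs at hm <;> omega
    have := hdown (b 1)
    omega

theorem eventuallyShadows_pathGraph : EventuallyShadows (pathGraph n) stepToward := by
  intro b t ht hb
  obtain ⟨m₀, hcaught⟩ := exists_stepToward_catch ht hb
  refine eventually_atTop.2 ⟨m₀, fun m hm => ?_⟩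
  induction m, hm using Nat.le_induction with
  | base => exact hcaught
  | succ m _ ih => rw [hb, ih, stepToward_eq_of_stepRel (ht m)]

end Path

section Grid

variable {k : ℕ} {n : Fin k → ℕ}

lemma stepRel_strongGrid_iff {x y : (i : Fin k) → Fin (n i)} :
    stepRel (strongGrid k n) x y ↔ ∀ i, stepRel (pathGraph (n i)) (x i) (y i) := by
  refine ⟨?_, fun h => ?_⟩
  · rintro (rfl | ⟨-, h⟩) i
    exacts [stepRel_refl _ _, h i]
  · by_cases hxy : x = y
    exacts [Or.inl hxy, Or.inr ⟨hxy, h⟩]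

theorem eventuallyShadows_strongGrid :
    EventuallyShadows (strongGrid k n) fun b t i => stepToward (b i) (t i) := by
  intro b t ht hb
  have hcoord : ∀ i, ∀ᶠ m in atTop, b (m + 1) i = t m i := fun i =>
    eventuallyShadows_pathGraph (fun m => b m i) (fun m => t m i)
      (fun m => stepRel_strongGrid_iff.1 (ht m) i) (fun m => congrFun (hb m) i)
  filter_upwards [eventually_all.2 hcoord] with m hm using funext hm

/-- The vertex `p + (d - 1)` for an offset `d - 1 ∈ {-1, 0, 1}ᵏ`, clamped into the grid (the
clamping at `0` is done by truncated subtraction). -/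
def offsetVertex (d : Fin k → Fin 3) (p : (i : Fin k) → Fin (n i)) : (i : Fin k) → Fin (n i) :=
  fun i => ⟨min ((p i : ℕ) + d i - 1) (n i - 1), by have := (p i).isLt; omega⟩

lemma stepRel_offsetVertex (d : Fin k → Fin 3) {p q : (i : Fin k) → Fin (n i)}
    (h : stepRel (strongGrid k n) p q) :
    stepRel (strongGrid k n) (offsetVertex d p) (offsetVertex d q) := by
  rw [stepRel_strongGrid_iff] at h ⊢
  intro i
  have := stepRel_pathGraph_iff.1 (h i)
  rw [stepRel_pathGraph_iff]
  simp only [offsetVertex]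
  omega

lemma exists_offsetVertex_eq {p v : (i : Fin k) → Fin (n i)} (h : (strongGrid k n).Adj p v) :
    ∃ d, d ≠ 1 ∧ offsetVertex d p = v := by
  have hclose := fun i => stepRel_pathGraph_iff.1 (stepRel_strongGrid_iff.1 (Or.inr h) i)
  refine ⟨fun i => ⟨v i + 1 - p i, by have := hclose i; omega⟩, fun hd => h.ne ?_,
    funext fun i => Fin.ext ?_⟩
  · funext i
    have := congrArg Fin.val (congrFun hd i)
    simp only [Pi.one_apply, Fin.val_one] at this
    have := hclose i
    exact Fin.ext (by omega)
  · have := (v i).isLt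
    have := hclose i
    simp only [offsetVertex]
    omega

lemma card_offsets (k : ℕ) : Fintype.card {d : Fin k → Fin 3 // d ≠ 1} = 3 ^ k - 1 := by
  simp [Fintype.card_subtype_compl]

theorem bodyguardsWin_strongGrid (hn : ∀ i, 0 < n i) :
    BodyguardsWin (strongGrid k n) (3 ^ k - 1) := by
  have : Nonempty ((i : Fin k) → Fin (n i)) := ⟨fun i => ⟨0, hn i⟩⟩
  let e := (Fintype.equivFinOfCardEq (card_offsets k)).symm
  refine bodyguardsWin_of_shadows
    (fun b t => stepRel_strongGrid_iff.2 fun i => stepRel_stepToward _ _)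
    eventuallyShadows_strongGrid (fun j => offsetVertex (e j))
    (fun j _ _ => stepRel_offsetVertex _) fun p v hv => ?_
  obtain ⟨d, hd, rfl⟩ := exists_offsetVertex_eq hv
  exact ⟨e.symm ⟨d, hd⟩, by simp⟩

lemma strongGrid_adj_castLE (hn : ∀ i, 3 ≤ n i) {d : Fin k → Fin 3} (hd : d ≠ 1) :
    (strongGrid k n).Adj (fun i => Fin.castLE (hn i) 1) (fun i => Fin.castLE (hn i) (d i)) := by
  refine adj_iff_ne_and_stepRel.2 ⟨fun h => hd ?_, stepRel_strongGrid_iff.2 fun i => ?_⟩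
  · funext i
    exact (Fin.castLE_injective (hn i) (congrFun h i)).symm
  · rw [stepRel_pathGraph_iff]
    have := (d i).isLt
    simp only [Fin.val_castLE, Fin.val_one]
    omega

lemma le_degree_strongGrid (hn : ∀ i, 3 ≤ n i)
    [Fintype ((strongGrid k n).neighborSet fun i => Fin.castLE (hn i) 1)] :
    3 ^ k - 1 ≤ (strongGrid k n).degree fun i => Fin.castLE (hn i) 1 := by
  rw [← card_offsets, ← card_neighborSet_eq_degree]
  refine Fintype.card_le_of_injective (fun d => ⟨_, strongGrid_adj_castLE hn d.2⟩) ?_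
  intro d d' h
  ext i : 2
  exact Fin.castLE_injective (hn i) (congrFun (congrArg Subtype.val h) i)

end Grid

theorem bodyguardNumber_strongGrid_general (k : ℕ) (n : Fin k → ℕ)
    (hn : ∀ i, 3 ≤ n i) :
    bodyguardNumber (strongGrid k n) = 3 ^ k - 1 := by
  classical
  exact bodyguardNumber_eq_of_le_degree
    (bodyguardsWin_strongGrid fun i => by have := hn i; omega) _ (le_degree_strongGrid hn)

/-- For `k ≥ 1` and `n i ≥ 3` for all `i`, the strong product of paths satisfies
`B(⊠_{i=1}^k P_{n i}) = 3 ^ k - 1`. -/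
theorem bodyguardNumber_strongGrid (k : ℕ) (hk : 1 ≤ k) (n : Fin k → ℕ)
    (hn : ∀ i, 3 ≤ n i) :
    bodyguardNumber (strongGrid k n) = 3 ^ k - 1 :=
  bodyguardNumber_strongGrid_general k n hn
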